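/- arXiv:1501.00625 — 3 statements merged into one kernel-verified Lean document; each statement's English description precedes it below -/
import Mathlib

section
/- Let X be a q-variate stationary process with past spaces M_{(-∞,n]} and future spaces M_{[n,∞)}. If M_{(-∞,-1]} ∩ M_{[0,∞)} = {0}, then for every n ≥ 1, M_{(-∞,-1]} ∩ M_{[-n,∞)} = M_{[-n,-1]}. -/
open MeasureTheory Complex Matrix
open scoped ENNReal InnerProductSpace ComplexOrder

/-- Normalized Lebesgue measure `dθ/(2π)` on `[-π,π)` (realized on `(-π,π]`). -/
noncomputable def sm : Measure ℝ :=
  (ENNReal.ofReal (2 * Real.pi)⁻¹) • (volume.restrict (Set.Ioc (-Real.pi) Real.pi))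

/-- Hardy class `H^p` on the unit circle, boundary-value formulation:
`f ∈ L^p` and all Fourier coefficients `∫ e^{imθ} f(e^{iθ}) dσ`, `m ≥ 1`, vanish. -/
def InHp (p : ℝ≥0∞) (f : ℝ → ℂ) : Prop :=
  MemLp f p sm ∧ ∀ m : ℤ, 1 ≤ m → (∫ θ, Complex.exp (m * θ * Complex.I) * f θ ∂sm) = 0

/-- Row-vector valued Hardy class `H²(𝕋, ℂ^{1×q})`. -/
def rowInH2 {q : ℕ} (f : ℝ → Fin q → ℂ) : Prop := ∀ j, InHp 2 (fun θ => f θ j)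

/-- Matrix valued Hardy class `H²(𝕋, ℂ^{q×q})`. -/
def matInH2 {q : ℕ} (h : ℝ → Matrix (Fin q) (Fin q) ℂ) : Prop :=
  ∀ i j, InHp 2 (fun θ => h θ i j)

/-- Outer matrix function: `det h` is a scalar outer function, i.e.
`log|det h(0)| = ∫ log|det h(e^{iθ})| dσ(θ)`, where `det h(0) = ∫ det h dσ`. -/
def OuterB {q : ℕ} (h : ℝ → Matrix (Fin q) (Fin q) ℂ) : Prop :=
  Real.log ‖∫ θ, (h θ).det ∂sm‖ =
    ∫ θ, Real.log ‖(h θ).det‖ ∂sm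

/-- Closed linear span `M_I^X` of the entries `X_j(k)`, `k ∈ I`, `j = 1,…,q`. -/
def spanX {q : ℕ} {H : Type*} [NormedAddCommGroup H] [InnerProductSpace ℂ H]
    (X : ℤ → Fin q → H) (I : Set ℤ) : Submodule ℂ H :=
  (Submodule.span ℂ {v | ∃ k ∈ I, ∃ j, v = X k j}).topologicalClosure

/-- `w` is the spectral density of the `q`-variate stationary process `X`:
`E[X(m) X(n)^*] = ∫ e^{-i(m-n)θ} w(e^{iθ}) dσ(θ)` entrywise. -/
def HasSpecDensity {q : ℕ} {H : Type*} [NormedAddCommGroup H] [InnerProductSpace ℂ H]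
    (X : ℤ → Fin q → H) (w : ℝ → Matrix (Fin q) (Fin q) ℂ) : Prop :=
  (∀ i j, Integrable (fun θ => w θ i j) sm) ∧
  (∀ᵐ θ ∂sm, (w θ).PosSemidef) ∧
  (∀ m n : ℤ, ∀ i j, ⟪X n j, X m i⟫_ℂ =
    ∫ θ, Complex.exp (-((m : ℂ) - (n : ℂ)) * (θ : ℂ) * Complex.I) * w θ i j ∂sm)

/-- Squared norm `‖f‖_w² = ∫ f w f^* dσ` in the weighted space `L(w)`. -/
noncomputable def wEnergy {q : ℕ} (w : ℝ → Matrix (Fin q) (Fin q) ℂ)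
    (f : ℝ → Fin q → ℂ) : ℝ :=
  ∫ θ, (dotProduct (Matrix.vecMul (f θ) (w θ)) (star (f θ))).re ∂sm

/-- Membership in the weighted space `L(w)`. -/
def memLw {q : ℕ} (w : ℝ → Matrix (Fin q) (Fin q) ℂ) (f : ℝ → Fin q → ℂ) : Prop :=
  AEStronglyMeasurable f sm ∧
  Integrable (fun θ => (dotProduct (Matrix.vecMul (f θ) (w θ)) (star (f θ))).re) sm

/-- Finite linear combinations of the functions `e_j(k)(z) = (0,…,z^{-k},…,0)`, `k ∈ I`. -/
def trigCombo {q : ℕ} (I : Set ℤ) (p : ℝ → Fin q → ℂ) : Prop :=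
  ∃ s : Finset ℤ, ↑s ⊆ I ∧ ∃ a : ℤ → Fin q → ℂ,
    p = fun (θ : ℝ) j => ∑ k ∈ s, a k j * Complex.exp (-(k : ℂ) * (θ : ℂ) * Complex.I)

/-- The set `H²(𝕋, ℂ^{1×q}) · h^{-1}` (boundary values). -/
def setH2h {q : ℕ} (h : ℝ → Matrix (Fin q) (Fin q) ℂ) : Set (ℝ → Fin q → ℂ) :=
  {f | ∃ v, rowInH2 v ∧ ∀ᵐ θ ∂sm, f θ = Matrix.vecMul (v θ) ((h θ)⁻¹)}

/-- The set `conj(H²(𝕋, ℂ^{1×q})) · (h_♯^*)^{-1}` (boundary values). -/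
def setConjH2hs {q : ℕ} (hs : ℝ → Matrix (Fin q) (Fin q) ℂ) : Set (ℝ → Fin q → ℂ) :=
  {f | ∃ u, rowInH2 u ∧ ∀ᵐ θ ∂sm, f θ = Matrix.vecMul (star (u θ)) (((hs θ)ᴴ)⁻¹)}

/-- The set `z^{-1} · conj(H²(𝕋, ℂ^{1×q})) · (h_♯^*)^{-1}` (boundary values). -/
def setConjH2hsNeg {q : ℕ} (hs : ℝ → Matrix (Fin q) (Fin q) ℂ) : Set (ℝ → Fin q → ℂ) :=
  {f | ∃ u, rowInH2 u ∧ ∀ᵐ θ ∂sm,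
    f θ = Complex.exp (-((θ : ℂ) * Complex.I)) • Matrix.vecMul (star (u θ)) (((hs θ)ᴴ)⁻¹)}

private lemma aux_isClosed_sup {H : Type*} [NormedAddCommGroup H] [InnerProductSpace ℂ H]
    [CompleteSpace H] (F N : Submodule ℂ H) [FiniteDimensional ℂ F]
    (hN : IsClosed (N : Set H)) :
    IsClosed ((F ⊔ N : Submodule ℂ H) : Set H) := by
  haveI : CompleteSpace N := hN.completeSpace_coe
  set φ : H →L[ℂ] H := ContinuousLinearMap.id ℂ H - N.subtypeL.comp (N.orthogonalProjectionOnto)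
  have hker : ∀ x, φ x = 0 ↔ x ∈ N := by
    intro x
    simp only [φ, ContinuousLinearMap.sub_apply, ContinuousLinearMap.id_apply,
      ContinuousLinearMap.comp_apply, Submodule.subtypeL_apply, sub_eq_zero]
    constructor
    · intro h; rw [h]; exact (N.orthogonalProjectionOnto x).2
    · intro h; exact ((Submodule.starProjection_eq_self_iff (K := N)).2 h).symm
  have key : F ⊔ N = Submodule.comap (φ : H →ₗ[ℂ] H) (F.map (φ : H →ₗ[ℂ] H)) := by
    apply le_antisymm
    · refine sup_le ?_ ?_
      · intro x hx; exact ⟨x, hx, rfl⟩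
      · intro x hx
        refine ⟨0, F.zero_mem, ?_⟩
        simp only [LinearMap.coe_coe, map_zero]
        exact ((hker x).2 hx).symm
    · rintro x ⟨f, hf, hfx⟩
      have hN' : x - f ∈ N := (hker (x - f)).1 (by
        simp only [ContinuousLinearMap.coe_coe] at hfx
        simp only [map_sub, hfx, sub_self])
      have : x = f + (x - f) := by abel
      rw [this]
      exact Submodule.add_mem _ (Submodule.mem_sup_left hf) (Submodule.mem_sup_right hN')
  rw [key]
  have : IsClosed ((F.map (φ : H →ₗ[ℂ] H) : Submodule ℂ H) : Set H) :=
    Submodule.closed_of_finiteDimensional _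
  exact this.preimage φ.continuous

private lemma spanX_mono {q : ℕ} {H : Type*} [NormedAddCommGroup H] [InnerProductSpace ℂ H]
    (X : ℤ → Fin q → H) {I J : Set ℤ} (hIJ : I ⊆ J) : spanX X I ≤ spanX X J :=
  Submodule.topologicalClosure_mono (Submodule.span_mono
    (fun v ⟨k, hk, j, hv⟩ => ⟨k, hIJ hk, j, hv⟩))

/-- Theorem 3.1: a `q`-variate (weakly stationary, centered) completely nondeterministic
process satisfies the intersection of past and future property (IPF). -/
theorem cnd_implies_ipf
    {q : ℕ} {H : Type*} [NormedAddCommGroup H] [InnerProductSpace ℂ H] [CompleteSpace H]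
    (X : ℤ → Fin q → H)
    (hstat : ∃ R : ℤ → Fin q → Fin q → ℂ, ∀ m n : ℤ, ∀ i j, ⟪X m i, X n j⟫_ℂ = R (m - n) i j)
    (hcnd : spanX X (Set.Iic (-1)) ⊓ spanX X (Set.Ici 0) = ⊥) :
    ∀ n : ℕ, 1 ≤ n →
      spanX X (Set.Iic (-1)) ⊓ spanX X (Set.Ici (-(n : ℤ)))
        = spanX X (Set.Icc (-(n : ℤ)) (-1)) := by
  intro n hn
  set P := spanX X (Set.Iic (-1 : ℤ)) with hP
  set S : Set H := {v | ∃ k ∈ Set.Icc (-(n : ℤ)) (-1), ∃ j, v = X k j} with hS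
  set F : Submodule ℂ H := Submodule.span ℂ S with hF
  set Nb := spanX X (Set.Ici (0 : ℤ)) with hNb
  have hSfin : S.Finite := by
    have hsub : S ⊆ (fun p : ℤ × Fin q => X p.1 p.2) ''
        ((Set.Icc (-(n : ℤ)) (-1)) ×ˢ (Set.univ : Set (Fin q))) := by
      rintro v ⟨k, hk, j, rfl⟩
      exact ⟨(k, j), ⟨hk, trivial⟩, rfl⟩
    exact Set.Finite.subset (((Set.finite_Icc _ _).prod Set.finite_univ).image _) hsub
  haveI : FiniteDimensional ℂ F := FiniteDimensional.span_of_finite ℂ hSfin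
  have hFclosed : IsClosed (F : Set H) := F.closed_of_finiteDimensional
  have hF_eq : spanX X (Set.Icc (-(n : ℤ)) (-1)) = F := by
    apply le_antisymm
    · exact Submodule.topologicalClosure_minimal _ le_rfl hFclosed
    · exact Submodule.le_topologicalClosure _
  have hNclosed : IsClosed (Nb : Set H) := Submodule.isClosed_topologicalClosure _
  have hsupclosed : IsClosed ((F ⊔ Nb : Submodule ℂ H) : Set H) :=
    aux_isClosed_sup F Nb hNclosed
  have hset : {v : H | ∃ k ∈ Set.Ici (-(n : ℤ)), ∃ j, v = X k j}
      = S ∪ {v | ∃ k ∈ Set.Ici (0 : ℤ), ∃ j, v = X k j} := by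
    ext v
    constructor
    · rintro ⟨k, hk, j, rfl⟩
      simp only [Set.mem_Ici] at hk
      rcases le_or_gt 0 k with h0 | h0
      · exact Or.inr ⟨k, h0, j, rfl⟩
      · exact Or.inl ⟨k, ⟨hk, by omega⟩, j, rfl⟩
    · rintro (⟨k, hk, j, rfl⟩ | ⟨k, hk, j, rfl⟩)
      · exact ⟨k, hk.1, j, rfl⟩
      · exact ⟨k, by simp only [Set.mem_Ici] at hk ⊢; omega, j, rfl⟩
  have hspan : spanX X (Set.Ici (-(n : ℤ))) = F ⊔ Nb := by
    show (Submodule.span ℂ _).topologicalClosure = _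
    rw [hset, Submodule.span_union]
    apply le_antisymm
    · refine Submodule.topologicalClosure_minimal _ ?_ hsupclosed
      exact sup_le_sup le_rfl (Submodule.le_topologicalClosure _)
    · refine sup_le ?_ ?_
      · exact le_trans le_sup_left (Submodule.le_topologicalClosure _)
      · exact Submodule.topologicalClosure_mono le_sup_right
  have hFP : F ≤ P := by
    refine Submodule.span_le.2 ?_
    rintro v ⟨k, hk, j, rfl⟩
    exact Submodule.le_topologicalClosure _
      (Submodule.subset_span ⟨k, hk.2, j, rfl⟩)
  apply le_antisymm
  · intro x hx
    obtain ⟨hxP, hxN⟩ := Submodule.mem_inf.1 hx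
    rw [hspan] at hxN
    rcases Submodule.mem_sup.1 hxN with ⟨f, hf, g, hg, rfl⟩
    have hgP : g ∈ P := by
      have := Submodule.sub_mem P hxP (hFP hf)
      simpa using this
    have hg0 : g ∈ P ⊓ Nb := Submodule.mem_inf.2 ⟨hgP, hg⟩
    rw [hcnd] at hg0
    have : g = 0 := hg0
    rw [this, add_zero, hF_eq]
    exact hf
  · refine le_inf ?_ ?_
    · exact spanX_mono X (fun k hk => hk.2)
    · exact spanX_mono X (fun k hk => hk.1)
end

section
/- The map G : L(w) → L²(𝕋, ℂ^{1×q}) defined by G(f) = conj(f h_♯*) = f̄ h_♯^T is a norm-preserving antilinear bijection, where w = h_♯* h_♯. -/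
open MeasureTheory Complex Matrix
open scoped ENNReal InnerProductSpace ComplexOrder

/-! Since `w = h_♯^* h_♯`, the quadratic form `f w f^*` is pointwise `|f h_♯^*|²`, so `G` preserves
norms. As `det w ≠ 0` a.e., `h_♯^*` is a.e. invertible, which makes `G` injective and exhibits
`g ↦ conj(g) (h_♯^*)⁻¹` as its inverse; this preimage is measurable by Cramer's rule. -/

section

variable {𝕜 n : Type*} [RCLike 𝕜] [Fintype n]

lemma re_vecMul_conjTranspose_mul_self_dotProduct_star (v : n → 𝕜) (B : Matrix n n 𝕜) :
    RCLike.re ((v ᵥ* (Bᴴ * B)) ⬝ᵥ star v) = ∑ j, ‖star (v ᵥ* Bᴴ) j‖ ^ 2 := by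
  rw [← vecMul_vecMul, ← dotProduct_mulVec, ← conjTranspose_conjTranspose B, ← star_vecMul,
    conjTranspose_conjTranspose, dotProduct, map_sum]
  refine Finset.sum_congr rfl fun j _ => ?_
  rw [Pi.star_apply, norm_star, RCLike.star_def, RCLike.mul_conj, ← RCLike.ofReal_pow,
    RCLike.ofReal_re]

lemma star_vecMul_star_vecMul_inv [DecidableEq n] {B : Matrix n n 𝕜} (hB : IsUnit B)
    (u : n → 𝕜) : star ((star u ᵥ* B⁻¹) ᵥ* B) = u := by
  rw [vecMul_vecMul, nonsing_inv_mul _ ((isUnit_iff_isUnit_det B).1 hB), vecMul_one, star_star]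

-- Mathlib puts no measurable structure on matrices, so measurability is stated entrywise.
variable {α : Type*} [MeasurableSpace α] {μ : Measure α}

lemma aemeasurable_inv_apply [DecidableEq n] {A : α → Matrix n n 𝕜}
    (hA : ∀ i j, AEMeasurable (fun x => A x i j) μ) (i j : n) :
    AEMeasurable (fun x => (A x)⁻¹ i j) μ := by
  have hA' : AEMeasurable (fun x i j => A x i j) μ :=
    aemeasurable_pi_lambda _ fun i => aemeasurable_pi_lambda _ fun j => hA i j
  have hinv : Measurable fun M : n → n → 𝕜 => (of M)⁻¹ i j := by
    simp only [Matrix.inv_def, Ring.inverse_eq_inv', Matrix.smul_apply, smul_eq_mul]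
    have hof : Continuous fun M : n → n → 𝕜 => of M := continuous_matrixOf.2 continuous_id
    exact (hof.matrix_det.measurable.inv).mul (hof.matrix_adjugate.matrix_elem i j).measurable
  exact hinv.comp_aemeasurable hA'

lemma aemeasurable_star_vecMul_inv [DecidableEq n] {A : α → Matrix n n 𝕜} {u : α → n → 𝕜}
    (hA : ∀ i j, AEMeasurable (fun x => A x i j) μ) (hu : ∀ i, AEMeasurable (fun x => u x i) μ) :
    AEMeasurable (fun x => star (u x) ᵥ* (A x)⁻¹) μ := by
  refine aemeasurable_pi_lambda _ fun j => ?_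
  simp only [vecMul, dotProduct, Pi.star_apply]
  exact Finset.aemeasurable_fun_sum _ fun i _ =>
    (continuous_star.measurable.comp_aemeasurable (hu i)).mul (aemeasurable_inv_apply hA i j)

end

theorem Gmap_antilinear_isometric_bijective_general
    {q : ℕ} (w hs : ℝ → Matrix (Fin q) (Fin q) ℂ)
    (G : (ℝ → Fin q → ℂ) → (ℝ → Fin q → ℂ))
    (hGdef : G = fun f θ => star (Matrix.vecMul (f θ) ((hs θ)ᴴ)))
    (hwpos : ∀ᵐ θ ∂sm, (w θ).PosSemidef ∧ (w θ).det ≠ 0)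
    (hhs : matInH2 hs)
    (hfac : ∀ᵐ θ ∂sm, w θ = (hs θ)ᴴ * hs θ) :
    (∀ (a : ℂ) (f g : ℝ → Fin q → ℂ),
        G (fun θ => a • f θ + g θ) = fun θ => (starRingEnd ℂ a) • G f θ + G g θ) ∧
    (∀ f : ℝ → Fin q → ℂ, memLw w f →
        (∫ θ, (∑ j, ‖G f θ j‖ ^ 2) ∂sm) = wEnergy w f) ∧
    (∀ f₁ f₂ : ℝ → Fin q → ℂ, memLw w f₁ → memLw w f₂ →
        (∀ᵐ θ ∂sm, G f₁ θ = G f₂ θ) → ∀ᵐ θ ∂sm, f₁ θ = f₂ θ) ∧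
    (∀ g : ℝ → Fin q → ℂ, (∀ j, MemLp (fun θ => g θ j) 2 sm) →
        ∃ f : ℝ → Fin q → ℂ, memLw w f ∧ ∀ᵐ θ ∂sm, G f θ = g θ) := by
  subst hGdef
  have hunit : ∀ᵐ θ ∂sm, IsUnit (hs θ)ᴴ := by
    filter_upwards [hwpos, hfac] with θ hw hθ
    rw [hθ, det_mul] at hw
    exact (isUnit_iff_isUnit_det _).2 (left_ne_zero_of_mul hw.2).isUnit
  have henergy (f : ℝ → Fin q → ℂ) : (fun θ => (f θ ᵥ* w θ ⬝ᵥ star (f θ)).re)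
      =ᵐ[sm] fun θ => ∑ j, ‖star (f θ ᵥ* (hs θ)ᴴ) j‖ ^ 2 := by
    filter_upwards [hfac] with θ hθ
    rw [hθ]
    exact re_vecMul_conjTranspose_mul_self_dotProduct_star (f θ) (hs θ)
  refine ⟨fun a f g => ?_, fun f _ => (integral_congr_ae (henergy f)).symm,
    fun f₁ f₂ _ _ hG => ?_, fun g hg => ?_⟩
  · funext θ
    simp only [add_vecMul, smul_vecMul, star_add, star_smul, starRingEnd_apply]
  · filter_upwards [hunit, hG] with θ hθ hGθ
    exact vecMul_injective_of_isUnit hθ (star_injective hGθ)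
  · set f : ℝ → Fin q → ℂ := fun θ => star (g θ) ᵥ* ((hs θ)ᴴ)⁻¹
    have hGf : ∀ᵐ θ ∂sm, star (f θ ᵥ* (hs θ)ᴴ) = g θ := by
      filter_upwards [hunit] with θ hθ
      exact star_vecMul_star_vecMul_inv hθ (g θ)
    have hf : AEMeasurable f sm :=
      aemeasurable_star_vecMul_inv (fun i j => continuous_star.measurable.comp_aemeasurable
        (hhs j i).1.1.aemeasurable) fun i => (hg i).1.aemeasurable
    have hint : Integrable (fun θ => ∑ j, ‖g θ j‖ ^ 2) sm :=
      integrable_finsetSum _ fun j _ => (hg j).norm.integrable_sq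
    refine ⟨f, ⟨hf.aestronglyMeasurable, hint.congr ?_⟩, hGf⟩
    filter_upwards [henergy f, hGf] with θ hE hθ
    rw [hE, hθ]

/-- The map `G : L(w) → L²(𝕋, ℂ^{1×q})`, `G(f) = conj(f h_♯^*)`, where `w = h_♯^* h_♯`,
is a norm-preserving antilinear bijection (antilinear, isometric, injective and surjective
modulo null sets). -/
theorem Gmap_antilinear_isometric_bijective
    {q : ℕ} (w hs : ℝ → Matrix (Fin q) (Fin q) ℂ)
    (G : (ℝ → Fin q → ℂ) → (ℝ → Fin q → ℂ))
    (hGdef : G = fun f θ => star (Matrix.vecMul (f θ) ((hs θ)ᴴ)))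
    (hwint : ∀ i j, Integrable (fun θ => w θ i j) sm)
    (hwpos : ∀ᵐ θ ∂sm, (w θ).PosSemidef ∧ (w θ).det ≠ 0)
    (hlog : Integrable (fun θ => Real.log ‖(w θ).det‖) sm)
    (hhs : matInH2 hs) (houter : OuterB hs)
    (hfac : ∀ᵐ θ ∂sm, w θ = (hs θ)ᴴ * hs θ) :
    (∀ (a : ℂ) (f g : ℝ → Fin q → ℂ),
        G (fun θ => a • f θ + g θ) = fun θ => (starRingEnd ℂ a) • G f θ + G g θ) ∧
    (∀ f : ℝ → Fin q → ℂ, memLw w f →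
        (∫ θ, (∑ j, ‖G f θ j‖ ^ 2) ∂sm) = wEnergy w f) ∧
    (∀ f₁ f₂ : ℝ → Fin q → ℂ, memLw w f₁ → memLw w f₂ →
        (∀ᵐ θ ∂sm, G f₁ θ = G f₂ θ) → ∀ᵐ θ ∂sm, f₁ θ = f₂ θ) ∧
    (∀ g : ℝ → Fin q → ℂ, (∀ j, MemLp (fun θ => g θ j) 2 sm) →
        ∃ f : ℝ → Fin q → ℂ, memLw w f ∧ ∀ᵐ θ ∂sm, G f θ = g θ) :=
  Gmap_antilinear_isometric_bijective_general w hs G hGdef hwpos hhs hfac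
end

section
/- Let f, g ∈ H²(𝕋) (scalar Hardy space) satisfy e^{-iθ} (conj(f(e^{iθ})))² = (g(e^{iθ}))² a.e. Then g = 0 (and hence f = 0). -/
open MeasureTheory Complex Matrix
open scoped ENNReal InnerProductSpace ComplexOrder

/-!
Transport `f, g` to `F, G ∈ L²(ℝ/2πℤ)`; membership in `H²` says that their negative Fourier
coefficients vanish. By the convolution formula `(G H)^(n) = ∑ₖ Ĝ(n - k) Ĥ(k)`, a product of two
such functions again has vanishing negative coefficients. The relation says `G² = conj (e₁ F²)`,
so the coefficient of `G²` at `n ≥ 0` is the conjugate of that of `F²` at `-(n + 1) < 0`; hence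
all coefficients of `G²` vanish. If `N` were the least index with `Ĝ(N) ≠ 0`, the coefficient of
`G²` at `2N` would be `Ĝ(N)²`. So `Ĝ = 0`, i.e. `G = 0`, and then `f = 0` by the relation.
-/

open AddCircle ComplexConjugate
open scoped Real

section FourierCoefficients

variable {T : ℝ} [Fact (0 < T)]

theorem fourierCoeff_mul_eq_tsum {G H : AddCircle T → ℂ} (hG : MemLp G 2 haarAddCircle)
    (hH : MemLp H 2 haarAddCircle) (n : ℤ) :
    fourierCoeff (G * H) n = ∑' k : ℤ, fourierCoeff G (n - k) * fourierCoeff H k := by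
  -- `(G H)^(n) = ⟪A, H⟫` with `A = eₙ · conj G`, which Parseval expands in the Fourier basis.
  set A : AddCircle T → ℂ := fun x => fourier n x * conj (G x)
  have hA : MemLp A 2 haarAddCircle := by
    refine hG.of_le (((fourier n).continuous.aestronglyMeasurable).mul
      (RCLike.continuous_conj.comp_aestronglyMeasurable hG.1)) (.of_forall fun x => ?_)
    simp [A, Circle.norm_coe]
  have hAH : ⟪hA.toLp A, hH.toLp H⟫_ℂ = fourierCoeff (G * H) n := by
    rw [L2.inner_def]
    refine integral_congr_ae ?_
    filter_upwards [hA.coeFn_toLp, hH.coeFn_toLp] with x hAx hHx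
    simp only [hAx, hHx, A, RCLike.inner_apply, map_mul, Complex.conj_conj, ← fourier_neg,
      Pi.mul_apply, smul_eq_mul]
    ring
  have hAk : ∀ k, ⟪hA.toLp A, fourierBasis k⟫_ℂ = fourierCoeff G (n - k) := fun k => by
    rw [← inner_conj_symm, ← HilbertBasis.repr_apply_apply, fourierBasis_repr,
      fourierCoeff_congr_ae hA.coeFn_toLp, fourierCoeff, fourierCoeff, ← integral_conj]
    refine integral_congr_ae (.of_forall fun x => ?_)
    simp only [A, smul_eq_mul, map_mul, Complex.conj_conj, ← fourier_neg, neg_neg,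
      show -(n - k) = k + -n by ring, fourier_add]
    ring
  have hkH : ∀ k, ⟪fourierBasis k, hH.toLp H⟫_ℂ = fourierCoeff H k := fun k => by
    rw [← HilbertBasis.repr_apply_apply, fourierBasis_repr, fourierCoeff_congr_ae hH.coeFn_toLp]
  rw [← hAH, ← fourierBasis.tsum_inner_mul_inner]
  simp only [hAk, hkH]

theorem fourierCoeff_mul_eq_zero_of_neg {G H : AddCircle T → ℂ} (hG : MemLp G 2 haarAddCircle)
    (hH : MemLp H 2 haarAddCircle) (hG₀ : ∀ k < 0, fourierCoeff G k = 0)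
    (hH₀ : ∀ k < 0, fourierCoeff H k = 0) {n : ℤ} (hn : n < 0) :
    fourierCoeff (G * H) n = 0 := by
  rw [fourierCoeff_mul_eq_tsum hG hH, ← tsum_zero]
  refine tsum_congr fun k => ?_
  rcases lt_or_ge k 0 with hk | hk
  · rw [hH₀ k hk, mul_zero]
  · rw [hG₀ (n - k) (by omega), zero_mul]

theorem ae_eq_zero_of_fourierCoeff_eq_zero {G : AddCircle T → ℂ} (hG : MemLp G 2 haarAddCircle)
    (h : fourierCoeff G = 0) : G =ᵐ[haarAddCircle] 0 := by
  have hG0 : hG.toLp G = 0 := fourierBasis.repr.injective <| by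
    ext k
    rw [fourierBasis_repr, fourierCoeff_congr_ae hG.coeFn_toLp, h, map_zero]
    rfl
  rw [Lp.eq_zero_iff_ae_eq_zero] at hG0
  exact hG.coeFn_toLp.symm.trans hG0

end FourierCoefficients

theorem eq_zero_of_tsum_mul_sub_self_eq_zero {R : Type*} [Ring R] [NoZeroDivisors R]
    [TopologicalSpace R] {c : ℤ → R} (h₀ : ∀ k < 0, c k = 0)
    (h : ∀ n, ∑' k, c (n - k) * c k = 0) : c = 0 := by
  suffices hnat : ∀ N : ℕ, c N = 0 by
    funext n
    rcases lt_or_ge n 0 with hn | hn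
    · exact h₀ n hn
    · lift n to ℕ using hn
      exact hnat n
  intro N
  induction N using Nat.strong_induction_on with
  | _ N ih =>
    have hlt : ∀ m : ℤ, m < N → c m = 0 := fun m hm => by
      rcases lt_or_ge m 0 with hm₀ | hm₀
      · exact h₀ m hm₀
      · lift m to ℕ using hm₀
        exact ih m (by exact_mod_cast hm)
    -- only the term `k = N` survives in the `2N`-th coefficient
    have h2N := h (2 * N)
    rw [tsum_eq_single (N : ℤ) fun k hk => ?_, show 2 * (N : ℤ) - N = N by ring] at h2N
    · exact mul_self_eq_zero.mp h2N
    · rcases lt_or_gt_of_ne hk with hk | hk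
      · rw [hlt k hk, mul_zero]
      · rw [hlt (2 * N - k) (by omega), zero_mul]

section UnitCircle

open Set

instance : Fact (0 < 2 * π) := ⟨Real.two_pi_pos⟩

theorem neg_pi_add_two_pi : -π + 2 * π = π := by ring

theorem integral_sm {E : Type*} [NormedAddCommGroup E] [NormedSpace ℝ E] (φ : ℝ → E) :
    ∫ θ, φ θ ∂sm = (2 * π)⁻¹ • ∫ θ in Ioc (-π) π, φ θ := by
  rw [sm, integral_smul_measure, ENNReal.toReal_ofReal (by positivity)]

theorem volume_restrict_Ioc_eq_smul_sm :
    volume.restrict (Ioc (-π) π) = ENNReal.ofReal (2 * π) • sm := by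
  rw [sm, smul_smul, ← ENNReal.ofReal_mul (by positivity), mul_inv_cancel₀ Real.two_pi_pos.ne',
    ENNReal.ofReal_one, one_smul]

theorem memLp_liftIoc_of_memLp_sm {u : ℝ → ℂ} {p : ℝ≥0∞} (hu : MemLp u p sm) :
    MemLp (liftIoc (2 * π) (-π) u) p haarAddCircle := by
  refine MemLp.haarAddCircle (MemLp.memLp_liftIoc ?_)
  rw [neg_pi_add_two_pi]
  exact volume_restrict_Ioc_eq_smul_sm ▸ hu.smul_measure ENNReal.ofReal_ne_top

theorem fourierCoeff_liftIoc_eq_integral_sm (u : ℝ → ℂ) (n : ℤ) :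
    fourierCoeff (liftIoc (2 * π) (-π) u) n = ∫ θ, exp (↑(-n) * θ * I) * u θ ∂sm := by
  rw [fourierCoeff, integral_haarAddCircle, ← AddCircle.integral_preimage _ (-π), integral_sm,
    neg_pi_add_two_pi]
  congr 1
  refine setIntegral_congr_fun measurableSet_Ioc fun θ hθ => ?_
  rw [liftIoc_coe_apply (by rwa [neg_pi_add_two_pi]), fourier_coe_apply, smul_eq_mul]
  congr 2
  push_cast
  field_simp

theorem InHp.fourierCoeff_liftIoc_eq_zero {p : ℝ≥0∞} {u : ℝ → ℂ} (hu : InHp p u) {n : ℤ}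
    (hn : n < 0) : fourierCoeff (liftIoc (2 * π) (-π) u) n = 0 := by
  rw [fourierCoeff_liftIoc_eq_integral_sm]
  exact hu.2 (-n) (by omega)

theorem ae_eq_zero_of_liftIoc_ae_eq_zero {u : ℝ → ℂ}
    (h : liftIoc (2 * π) (-π) u =ᵐ[haarAddCircle] 0) : u =ᵐ[sm] 0 := by
  have hmp := AddCircle.measurePreserving_mk (2 * π) (-π)
  rw [neg_pi_add_two_pi] at hmp
  have hvol : liftIoc (2 * π) (-π) u =ᵐ[volume] 0 := by
    rw [volume_eq_smul_haarAddCircle]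
    exact Measure.ae_smul_measure h _
  have hcomp := hmp.quasiMeasurePreserving.ae_eq_comp hvol
  refine Measure.ae_smul_measure ?_ _
  filter_upwards [hcomp, ae_restrict_mem measurableSet_Ioc] with θ hθ hmem
  rwa [Function.comp_apply, liftIoc_coe_apply (by rwa [neg_pi_add_two_pi])] at hθ

theorem fourierCoeff_liftIoc_mul_self_of_relation {f g : ℝ → ℂ}
    (hrel : ∀ᵐ θ : ℝ ∂sm, exp (-(θ * I)) * conj (f θ) ^ 2 = g θ ^ 2) (n : ℤ) :
    fourierCoeff (liftIoc (2 * π) (-π) g * liftIoc (2 * π) (-π) g) n =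
      conj (fourierCoeff (liftIoc (2 * π) (-π) f * liftIoc (2 * π) (-π) f) (-(n + 1))) := by
  change fourierCoeff (liftIoc _ _ (g * g)) n = conj (fourierCoeff (liftIoc _ _ (f * f)) _)
  rw [fourierCoeff_liftIoc_eq_integral_sm, fourierCoeff_liftIoc_eq_integral_sm, ← integral_conj]
  refine integral_congr_ae ?_
  filter_upwards [hrel] with θ hθ
  simp only [Pi.mul_apply, ← sq, ← hθ, map_mul, map_pow, ← exp_conj, conj_ofReal, conj_I,
    map_intCast, ← mul_assoc, ← exp_add]
  push_cast
  ring_nf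

end UnitCircle

/-- If `f, g ∈ H²(𝕋)` satisfy `e^{-iθ} (conj f(e^{iθ}))² = (g(e^{iθ}))²` a.e., then
`g = 0` and hence `f = 0`. -/
theorem hardy_sq_relation_implies_zero
    (f g : ℝ → ℂ) (hf : InHp 2 f) (hg : InHp 2 g)
    (hrel : ∀ᵐ θ ∂sm,
      Complex.exp (-(Complex.ofReal θ * Complex.I)) * (starRingEnd ℂ (f θ)) ^ 2
        = (g θ) ^ 2) :
    (∀ᵐ θ ∂sm, g θ = 0) ∧ (∀ᵐ θ ∂sm, f θ = 0) := by
  set F := liftIoc (2 * π) (-π) f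
  set G := liftIoc (2 * π) (-π) g
  have hF := memLp_liftIoc_of_memLp_sm hf.1
  have hG := memLp_liftIoc_of_memLp_sm hg.1
  have hF₀ : ∀ k < 0, fourierCoeff F k = 0 := fun _ => hf.fourierCoeff_liftIoc_eq_zero
  have hG₀ : ∀ k < 0, fourierCoeff G k = 0 := fun _ => hg.fourierCoeff_liftIoc_eq_zero
  have hGG : ∀ n, fourierCoeff (G * G) n = 0 := fun n => by
    rcases lt_or_ge n 0 with hn | hn
    · exact fourierCoeff_mul_eq_zero_of_neg hG hG hG₀ hG₀ hn
    · rw [fourierCoeff_liftIoc_mul_self_of_relation hrel,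
        fourierCoeff_mul_eq_zero_of_neg hF hF hF₀ hF₀ (by omega), map_zero]
  have hĜ : fourierCoeff G = 0 :=
    eq_zero_of_tsum_mul_sub_self_eq_zero hG₀ fun n => fourierCoeff_mul_eq_tsum hG hG n ▸ hGG n
  have hg₀ : g =ᵐ[sm] 0 :=
    ae_eq_zero_of_liftIoc_ae_eq_zero (ae_eq_zero_of_fourierCoeff_eq_zero hG hĜ)
  refine ⟨hg₀, ?_⟩
  filter_upwards [hg₀, hrel] with θ hgθ hθ
  simpa [hgθ, exp_ne_zero] using hθ
end
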